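/- For positive integers t ≤ k ≤ v with k < v and λ ≥ 1, the covering number satisfies C_λ(v,k,t) ≥ ⌈(v/k) · C_λ(v−1,k−1,t−1)⌉. -/

import Mathlib

/-!
Fix an optimal t-(v,k,λ) covering. For each point x, the blocks through x, with x deleted,
form a (t-1)-(v-1,k-1,λ) covering (the derived covering at x), so x lies on at least
C_λ(v-1,k-1,t-1) blocks. Counting incidences between points and blocks gives
v · C_λ(v-1,k-1,t-1) ≤ k · C_λ(v,k,t).
-/

/-- A t-(v,k,λ) covering: V has v points, every block is a k-subset of V,
and every t-subset of V is contained in at least λ blocks. -/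
def IsCovering {α : Type*} [DecidableEq α] (v k t lam : ℕ)
    (V : Finset α) (B : Multiset (Finset α)) : Prop :=
  V.card = v ∧ (∀ b ∈ B, b ⊆ V ∧ b.card = k) ∧
    ∀ T ⊆ V, T.card = t → lam ≤ Multiset.card (B.filter (fun b => T ⊆ b))

/-- The covering number C_λ(v,k,t): the minimum number of blocks of a t-(v,k,λ) covering. -/
noncomputable def coveringNumber (lam v k t : ℕ) : ℕ :=
  sInf {n | ∃ B : Multiset (Finset (Fin v)), Multiset.card B = n ∧
    IsCovering v k t lam Finset.univ B}

variable {α β : Type*} [DecidableEq α] [DecidableEq β] {v k t lam : ℕ} {V : Finset α}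
  {B : Multiset (Finset α)}

theorem Multiset.sum_card_filter_mem [Fintype α] (B : Multiset (Finset α)) :
    ∑ x : α, Multiset.card (B.filter (x ∈ ·)) = (B.map Finset.card).sum := by
  induction B using Multiset.induction with
  | empty => simp
  | cons b B ih => simp [Multiset.filter_cons, apply_ite, Finset.sum_add_distrib, ih]

namespace IsCovering

theorem image {f : α → β} (hB : IsCovering v k t lam V B) (hf : Set.InjOn f V) :
    IsCovering v k t lam (V.image f) (B.map (Finset.image f)) := by
  obtain ⟨hV, hblocks, hcov⟩ := hB
  refine ⟨by rw [Finset.card_image_of_injOn hf, hV], ?_, ?_⟩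
  · simp only [Multiset.mem_map, forall_exists_index, and_imp]
    rintro _ b hb rfl
    obtain ⟨hbV, hbk⟩ := hblocks b hb
    exact ⟨Finset.image_subset_image hbV,
      by rw [Finset.card_image_of_injOn (hf.mono (Finset.coe_subset.mpr hbV)), hbk]⟩
  · intro T hTV hT
    obtain ⟨T', hT'V, rfl⟩ := Finset.subset_image_iff.mp hTV
    rw [Finset.card_image_of_injOn (hf.mono (Finset.coe_subset.mpr hT'V))] at hT
    calc lam ≤ Multiset.card (B.filter (T' ⊆ ·)) := hcov T' hT'V hT
      _ ≤ Multiset.card (B.filter (fun b => T'.image f ⊆ b.image f)) :=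
          Multiset.card_le_card
            (Multiset.monotone_filter_right B fun _ => Finset.image_subset_image)
      _ = _ := by rw [Multiset.filter_map, Multiset.card_map]; rfl

theorem derived (hB : IsCovering v k t lam V B) (ht : 0 < t) {x : α} (hx : x ∈ V) :
    IsCovering (v - 1) (k - 1) (t - 1) lam (V.erase x)
      ((B.filter (x ∈ ·)).map (·.erase x)) := by
  obtain ⟨hV, hblocks, hcov⟩ := hB
  refine ⟨by rw [Finset.card_erase_of_mem hx, hV], ?_, ?_⟩
  · simp only [Multiset.mem_map, Multiset.mem_filter, forall_exists_index, and_imp]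
    rintro _ b hb hxb rfl
    obtain ⟨hbV, hbk⟩ := hblocks b hb
    exact ⟨Finset.erase_subset_erase x hbV, by rw [Finset.card_erase_of_mem hxb, hbk]⟩
  · intro T hTV hT
    have hxT : x ∉ T := fun h => Finset.notMem_erase x V (hTV h)
    have hinsert : ∀ b : Finset α, insert x T ⊆ b ↔ T ⊆ b.erase x ∧ x ∈ b := fun b => by
      rw [Finset.insert_subset_iff, Finset.subset_erase]
      tauto
    calc lam ≤ Multiset.card (B.filter (insert x T ⊆ ·)) :=
          hcov _ (Finset.insert_subset hx (hTV.trans (Finset.erase_subset x V)))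
            (by rw [Finset.card_insert_of_notMem hxT, hT]; omega)
      _ = _ := by
          rw [Multiset.filter_map, Multiset.card_map, Multiset.filter_filter]
          simp only [Function.comp_def, hinsert]

end IsCovering

theorem isCovering_nsmul_powersetCard (lam : ℕ) (htk : t ≤ k) (hkV : k ≤ V.card) :
    IsCovering V.card k t lam V (lam • (V.powersetCard k).val) := by
  refine ⟨rfl, fun b hb => Finset.mem_powersetCard.mp (Multiset.mem_of_mem_nsmul hb),
    fun T hTV hT => ?_⟩
  obtain ⟨u, hTu, huV, hu⟩ := Finset.exists_subsuperset_card_eq hTV (hT ▸ htk) hkV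
  rw [Multiset.filter_nsmul, Multiset.card_nsmul]
  exact Nat.le_mul_of_pos_right lam (Multiset.card_pos_iff_exists_mem.mpr
    ⟨u, Multiset.mem_filter.mpr ⟨Finset.mem_powersetCard.mpr ⟨huV, hu⟩, hTu⟩⟩)

theorem exists_isCovering_card_eq_coveringNumber (lam : ℕ) (htk : t ≤ k) (hkv : k ≤ v) :
    ∃ B : Multiset (Finset (Fin v)), Multiset.card B = coveringNumber lam v k t ∧
      IsCovering v k t lam Finset.univ B :=
  Nat.sInf_mem (s := {n | ∃ B : Multiset (Finset (Fin v)), Multiset.card B = n ∧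
      IsCovering v k t lam Finset.univ B}) ⟨_, _, rfl, by
    simpa using isCovering_nsmul_powersetCard (V := (Finset.univ : Finset (Fin v))) lam htk
      (by simpa using hkv)⟩

theorem coveringNumber_le_card (hv : 0 < v) (hB : IsCovering v k t lam V B) :
    coveringNumber lam v k t ≤ Multiset.card B := by
  let e : V ≃ Fin v := V.equivFin.trans (finCongr hB.1)
  let f : α → Fin v := fun a => if h : a ∈ V then e ⟨a, h⟩ else ⟨0, hv⟩
  have hf : Set.InjOn f V := fun a ha b hb hab => by
    simpa [f, Finset.mem_coe.mp ha, Finset.mem_coe.mp hb] using hab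
  have hfV : V.image f = Finset.univ := Finset.eq_univ_of_card _ (by
    rw [Finset.card_image_of_injOn hf, hB.1, Fintype.card_fin])
  refine Nat.sInf_le ⟨B.map (Finset.image f), Multiset.card_map _ _, ?_⟩
  simpa only [hfV] using hB.image hf

theorem IsCovering.mul_coveringNumber_le [Fintype α] (hB : IsCovering v k t lam V B)
    (ht : 0 < t) (hv : 1 < v) :
    v * coveringNumber lam (v - 1) (k - 1) (t - 1) ≤ k * Multiset.card B := by
  calc v * coveringNumber lam (v - 1) (k - 1) (t - 1)
      = ∑ _x ∈ V, coveringNumber lam (v - 1) (k - 1) (t - 1) := by simp [hB.1]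
    _ ≤ ∑ x ∈ V, Multiset.card (B.filter (x ∈ ·)) := Finset.sum_le_sum fun x hx => by
          simpa using coveringNumber_le_card (by omega) (hB.derived ht hx)
    _ ≤ ∑ x, Multiset.card (B.filter (x ∈ ·)) :=
          Finset.sum_le_univ_sum_of_nonneg fun _ => Nat.zero_le _
    _ = (B.map Finset.card).sum := Multiset.sum_card_filter_mem B
    _ = k * Multiset.card B := by
          rw [Multiset.map_congr rfl fun b hb => (hB.2.1 b hb).2, Multiset.map_const',
            Multiset.sum_replicate, smul_eq_mul, mul_comm]

theorem stmt2_general (v k t lam : ℕ) (ht : 0 < t) (htk : t ≤ k) (hkv : k < v) :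
    (⌈((v : ℚ) / k) * (coveringNumber lam (v - 1) (k - 1) (t - 1))⌉ : ℤ)
      ≤ (coveringNumber lam v k t : ℤ) := by
  obtain ⟨B, hBcard, hB⟩ := exists_isCovering_card_eq_coveringNumber lam htk hkv.le
  have hcount := hB.mul_coveringNumber_le ht (by omega)
  rw [hBcard] at hcount
  have hk : (0 : ℚ) < k := by exact_mod_cast (by omega : 0 < k)
  rw [Int.ceil_le, div_mul_eq_mul_div, div_le_iff₀ hk]
  push_cast
  exact_mod_cast (by linarith : v * coveringNumber lam (v - 1) (k - 1) (t - 1) ≤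
    coveringNumber lam v k t * k)

/-- C_λ(v,k,t) ≥ ⌈(v/k) · C_λ(v−1,k−1,t−1)⌉. -/
theorem stmt2 (v k t lam : ℕ) (ht : 0 < t) (htk : t ≤ k) (hkv : k < v) (hlam : 0 < lam) :
    (⌈((v : ℚ) / k) * (coveringNumber lam (v - 1) (k - 1) (t - 1))⌉ : ℤ)
      ≤ (coveringNumber lam v k t : ℤ) :=
  stmt2_general v k t lam ht htk hkv
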